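/- Let k ≥ 1 and for each i ∈ {1,…,k} let A_i ∈ ℕ^{d_i×n_i} be a matrix with nonnegative integer entries whose first row is the all-ones vector. Let A be the block-diagonal matrix with diagonal blocks A_1,…,A_k (of size (Σ_i d_i) × (Σ_i n_i)). Then D(M_A) = max{D(M_{A_1}), …, D(M_{A_k})}. -/

import Mathlib

/-!
Split p into its block masses λᵢ and its conditional distributions p̂ᵢ on the blocks. Since the
all-ones vector lies in the row span of each block, the parameters of a block can be shifted to
give it any positive weight; hence (λᵢ qᵢ)ᵢ lies in M_A whenever each qᵢ lies in M_{A_i}, and the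
chain rule D(p‖(λᵢ qᵢ)ᵢ) = Σᵢ λᵢ D(p̂ᵢ‖qᵢ) bounds D_{M_A}(p) by the largest D(M_{A_i}).
Conversely, the conditional q̂ᵢ of a point q of M_A on block i lies in M_{A_i}, and a distribution
p carried by block i satisfies D(p‖q) ≥ D(p̂ᵢ‖q̂ᵢ).
-/

open scoped BigOperators Pointwise

attribute [local instance] Classical.propDecidable

def simplex (ι : Type*) [Fintype ι] : Set (ι → ℝ) :=
  {p | (∀ i, 0 ≤ p i) ∧ ∑ i, p i = 1}

noncomputable def KL {ι : Type*} [Fintype ι] (p q : ι → ℝ) : EReal :=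
  if ∀ i, q i = 0 → p i = 0 then (((∑ i, p i * Real.log (p i / q i)) : ℝ) : EReal) else ⊤

noncomputable def divFrom {ι : Type*} [Fintype ι] (M : Set (ι → ℝ)) (p : ι → ℝ) : EReal :=
  ⨅ q ∈ M, KL p q

noncomputable def EA {κ ι : Type*} [Fintype κ] [Fintype ι] (A : Matrix κ ι ℕ) : Set (ι → ℝ) :=
  {p | ∃ θ : κ → ℝ, ∀ j, p j =
    Real.exp (∑ i, θ i * (A i j : ℝ)) / ∑ l, Real.exp (∑ i, θ i * (A i l : ℝ))}

noncomputable def toric {κ ι : Type*} [Fintype κ] [Fintype ι] (A : Matrix κ ι ℕ) :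
    Set (ι → ℝ) :=
  closure (EA A)

noncomputable def maxDiv {ι : Type*} [Fintype ι] (M : Set (ι → ℝ)) : EReal :=
  ⨆ p ∈ simplex ι, divFrom M p

theorem isClosed_simplex (ι : Type*) [Fintype ι] : IsClosed (simplex ι) := by
  rw [show simplex ι = (⋂ i, {p | 0 ≤ p i}) ∩ {p | ∑ i, p i = 1} by ext; simp [simplex]]
  exact (isClosed_iInter fun i => isClosed_le continuous_const (continuous_apply i)).inter
    (isClosed_eq (continuous_finsetSum _ fun i _ => continuous_apply i) continuous_const)

theorem nonempty_of_mem_simplex {ι : Type*} [Fintype ι] {p : ι → ℝ} (hp : p ∈ simplex ι) :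
    Nonempty ι := by
  by_contra h
  simpa [not_nonempty_iff.mp h] using hp.2

theorem EA_subset_simplex {κ ι : Type*} [Fintype κ] [Fintype ι] [Nonempty ι]
    (A : Matrix κ ι ℕ) : EA A ⊆ simplex ι := by
  rintro p ⟨θ, hθ⟩
  have hZ : 0 < ∑ l, Real.exp (∑ i, θ i * (A i l : ℝ)) :=
    Finset.sum_pos (fun l _ => Real.exp_pos _) Finset.univ_nonempty
  refine ⟨fun j => hθ j ▸ by positivity, ?_⟩
  simp only [hθ, ← Finset.sum_div, div_self hZ.ne']

theorem toric_subset_simplex {κ ι : Type*} [Fintype κ] [Fintype ι] [Nonempty ι]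
    (A : Matrix κ ι ℕ) : toric A ⊆ simplex ι :=
  closure_minimal (EA_subset_simplex A) (isClosed_simplex ι)

theorem EA_nonempty {κ ι : Type*} [Fintype κ] [Fintype ι] (A : Matrix κ ι ℕ) :
    (EA A).Nonempty :=
  ⟨_, 0, fun _ => rfl⟩

section KL

variable {ι : Type*} [Fintype ι]

theorem KL_le_coe_iff {p q : ι → ℝ} {r : ℝ} :
    KL p q ≤ r ↔ (∀ i, q i = 0 → p i = 0) ∧ ∑ i, p i * Real.log (p i / q i) ≤ r := by
  unfold KL
  split_ifs with h
  · rw [EReal.coe_le_coe_iff]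
    exact ⟨fun hs => ⟨h, hs⟩, And.right⟩
  · simp [h]

theorem KL_zero_right {p : ι → ℝ} (hp : ∑ i, p i ≠ 0) : KL p 0 = ⊤ := by
  rw [KL, if_neg]
  contrapose! hp
  simp [hp]

theorem KL_le_KL_of_le_right {p q q' : ι → ℝ} (hp : ∀ i, 0 ≤ p i) (hq : ∀ i, 0 ≤ q i)
    (hqq' : ∀ i, q i ≤ q' i) : KL p q' ≤ KL p q := by
  by_cases hsupp : ∀ i, q i = 0 → p i = 0
  · have hsupp' : ∀ i, q' i = 0 → p i = 0 := fun i hi =>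
      hsupp i (le_antisymm (hi ▸ hqq' i) (hq i))
    rw [KL, if_pos hsupp', KL, if_pos hsupp, EReal.coe_le_coe_iff]
    refine Finset.sum_le_sum fun i _ => ?_
    rcases (hp i).eq_or_lt with h0 | hpi
    · simp [← h0]
    have hqi : 0 < q i := (hq i).lt_of_ne (Ne.symm (mt (hsupp i) hpi.ne'))
    gcongr
    · exact div_pos hpi (hqi.trans_le (hqq' i))
    · exact hqq' i
  · unfold KL
    rw [if_neg hsupp]
    exact le_top

theorem KL_extend_zero {ι' : Type*} [Fintype ι'] {f : ι → ι'} (hf : f.Injective)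
    (p : ι → ℝ) (q : ι' → ℝ) : KL (Function.extend f p 0) q = KL p (q ∘ f) := by
  have hsupp : (∀ y, q y = 0 → Function.extend f p 0 y = 0) ↔ ∀ x, q (f x) = 0 → p x = 0 := by
    refine ⟨fun h x hx => by simpa [hf.extend_apply] using h (f x) hx, fun h y hy => ?_⟩
    by_cases hy : ∃ x, f x = y
    · obtain ⟨x, rfl⟩ := hy
      simpa [hf.extend_apply] using h x hy
    · simp [Function.extend_apply' _ _ _ hy]
  have hsum : ∑ x, p x * Real.log (p x / (q ∘ f) x) =
      ∑ y, Function.extend f p 0 y * Real.log (Function.extend f p 0 y / q y) := by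
    refine Fintype.sum_of_injective f hf _ _ (fun y hy => ?_) (fun x => by simp [hf.extend_apply])
    simp [Function.extend_apply' _ _ _ (by simpa using hy)]
  unfold KL
  rw [hsum]
  exact if_congr hsupp rfl rfl

theorem extend_zero_mem_simplex {ι' : Type*} [Fintype ι'] {f : ι → ι'} (hf : f.Injective)
    {p : ι → ℝ} (hp : p ∈ simplex ι) : Function.extend f p 0 ∈ simplex ι' := by
  refine ⟨fun y => ?_, ?_⟩
  · by_cases hy : ∃ x, f x = y
    · obtain ⟨x, rfl⟩ := hy
      simpa [hf.extend_apply] using hp.1 x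
    · simp [Function.extend_apply' _ _ _ hy]
  · rw [← hp.2]
    refine (Fintype.sum_of_injective f hf _ _ (fun y hy => ?_)
      (fun x => by simp [hf.extend_apply])).symm
    simp [Function.extend_apply' _ _ _ (by simpa using hy)]

end KL

section Blocks

variable {o : Type*} {n : o → Type*} [∀ i, Fintype (n i)]

def blockMass (p : (Σ i, n i) → ℝ) (i : o) : ℝ :=
  ∑ j, p ⟨i, j⟩

/-- Identically `0` on a block of mass `0`. -/
noncomputable def blockCond (p : (Σ i, n i) → ℝ) (i : o) : n i → ℝ :=
  fun j => p ⟨i, j⟩ / blockMass p i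

def blockMix (w : o → ℝ) (v : ∀ i, n i → ℝ) : (Σ i, n i) → ℝ :=
  fun x => w x.1 * v x.1 x.2

theorem blockMix_blockMass_blockCond {p : (Σ i, n i) → ℝ} (hp : ∀ x, 0 ≤ p x) :
    blockMix (blockMass p) (blockCond p) = p := by
  funext ⟨i, j⟩
  rcases eq_or_ne (blockMass p i) 0 with h0 | h0
  · simp only [blockMix, blockCond, h0, zero_mul]
    exact ((Finset.sum_eq_zero_iff_of_nonneg fun j _ => hp ⟨i, j⟩).1 h0 j
      (Finset.mem_univ j)).symm
  · exact mul_div_cancel₀ _ h0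

variable [Fintype o]

theorem blockMass_le_one {p : (Σ i, n i) → ℝ} (hp : p ∈ simplex (Σ i, n i)) (i : o) :
    blockMass p i ≤ 1 := by
  rw [← hp.2, Fintype.sum_sigma]
  exact Finset.single_le_sum (f := blockMass p)
    (fun i _ => Finset.sum_nonneg fun j _ => hp.1 _) (Finset.mem_univ i)

theorem sum_blockMass (p : (Σ i, n i) → ℝ) : ∑ i, blockMass p i = ∑ x, p x :=
  (Fintype.sum_sigma p).symm

theorem blockCond_mem_simplex {p : (Σ i, n i) → ℝ} (hp : p ∈ simplex (Σ i, n i)) {i : o}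
    (hi : blockMass p i ≠ 0) : blockCond p i ∈ simplex (n i) :=
  ⟨fun j => div_nonneg (hp.1 _) (Finset.sum_nonneg fun j _ => hp.1 _),
    by simp only [blockCond, ← Finset.sum_div, blockMass] at hi ⊢; exact div_self hi⟩

theorem sum_blockMix (w : o → ℝ) (v : ∀ i, n i → ℝ) :
    ∑ x, blockMix w v x = ∑ i, w i * ∑ j, v i j := by
  simp only [Fintype.sum_sigma, blockMix, Finset.mul_sum]

theorem sum_blockMix_mul_log_div (w : o → ℝ) (a b : ∀ i, n i → ℝ) :
    ∑ x, blockMix w a x * Real.log (blockMix w a x / blockMix w b x) =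
      ∑ i, w i * ∑ j, a i j * Real.log (a i j / b i j) := by
  rw [Fintype.sum_sigma]
  refine Finset.sum_congr rfl fun i _ => ?_
  rcases eq_or_ne (w i) 0 with h0 | h0
  · simp [blockMix, h0]
  · simp only [blockMix, mul_div_mul_left _ _ h0, Finset.mul_sum, mul_assoc]

theorem KL_blockMix_le {w : o → ℝ} (hw : ∀ i, 0 ≤ w i) (hw1 : ∑ i, w i = 1)
    {a b : ∀ i, n i → ℝ} {r : ℝ} (h : ∀ i, w i ≠ 0 → KL (a i) (b i) ≤ r) :
    KL (blockMix w a) (blockMix w b) ≤ r := by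
  simp only [KL_le_coe_iff] at h ⊢
  refine ⟨fun ⟨i, j⟩ hij => ?_, ?_⟩
  · rcases eq_or_ne (w i) 0 with h0 | h0
    · simp [blockMix, h0]
    · simp only [blockMix, mul_eq_zero, h0, false_or] at hij ⊢
      exact (h i h0).1 j hij
  · rw [sum_blockMix_mul_log_div]
    calc ∑ i, w i * ∑ j, a i j * Real.log (a i j / b i j) ≤ ∑ i, w i * r := by
          refine Finset.sum_le_sum fun i _ => ?_
          rcases eq_or_ne (w i) 0 with h0 | h0
          · simp [h0]
          · exact mul_le_mul_of_nonneg_left (h i h0).2 (hw i)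
      _ = r := by rw [← Finset.sum_mul, hw1, one_mul]

end Blocks

section BlockDiagonal

variable {o : Type*} [Fintype o] [DecidableEq o] {m n : o → Type*} [∀ i, Fintype (m i)]
  (A : ∀ i, Matrix (m i) (n i) ℕ)

theorem sum_mul_blockDiagonal'_apply (θ : (Σ i, m i) → ℝ) (i : o) (j : n i) :
    ∑ r, θ r * ((Matrix.blockDiagonal' A r ⟨i, j⟩ : ℕ) : ℝ) = ∑ r, θ ⟨i, r⟩ * (A i r j : ℝ) := by
  rw [Fintype.sum_sigma, Finset.sum_eq_single i]
  · simp only [Matrix.blockDiagonal'_apply_eq]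
  · intro i' _ hi'
    simp [Matrix.blockDiagonal'_apply_ne A _ _ hi']
  · simp

variable [∀ i, Fintype (n i)]

theorem blockCond_mem_EA {q : (Σ i, n i) → ℝ} (hq : q ∈ EA (Matrix.blockDiagonal' A)) (i : o) :
    blockCond q i ∈ EA (A i) := by
  obtain ⟨θ, hθ⟩ := hq
  refine ⟨fun r => θ ⟨i, r⟩, fun j => ?_⟩
  have hZ : 0 < ∑ l, Real.exp (∑ r, θ r * ((Matrix.blockDiagonal' A r l : ℕ) : ℝ)) :=
    Finset.sum_pos (fun l _ => Real.exp_pos _) ⟨⟨i, j⟩, Finset.mem_univ _⟩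
  simp only [blockCond, blockMass, hθ, ← Finset.sum_div]
  rw [div_div_div_cancel_right₀ hZ.ne']
  simp only [sum_mul_blockDiagonal'_apply]

theorem blockCond_mem_toric {q : (Σ i, n i) → ℝ} (hq : q ∈ toric (Matrix.blockDiagonal' A))
    {i : o} (hi : blockMass q i ≠ 0) : blockCond q i ∈ toric (A i) := by
  have hcont : ContinuousAt (fun q => blockCond q i) q := by
    refine continuousAt_pi.2 fun j => (continuous_apply (⟨i, j⟩ : Σ i, n i)).continuousAt.div ?_ hi
    exact (continuous_finsetSum _ fun l _ => continuous_apply (⟨i, l⟩ : Σ i, n i)).continuousAt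
  have hmaps : (fun q => blockCond q i) '' EA (Matrix.blockDiagonal' A) ⊆ EA (A i) := by
    rintro _ ⟨q', hq', rfl⟩
    exact blockCond_mem_EA A hq' i
  exact closure_mono hmaps (hcont.continuousWithinAt.mem_closure_image hq)

theorem normalize_blockMix_mem_EA
    (hone : ∀ i, ∃ c : m i → ℝ, ∀ j, ∑ r, c r * (A i r j : ℝ) = 1)
    {w : o → ℝ} (hw : ∀ i, 0 < w i) {v : ∀ i, n i → ℝ}
    (hv : ∀ i, v i ∈ EA (A i)) :
    (fun x => blockMix w v x / ∑ y, blockMix w v y) ∈ EA (Matrix.blockDiagonal' A) := by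
  choose φ hφ using hv
  choose c hc using hone
  set W : o → ℝ := fun i => ∑ l, Real.exp (∑ r, φ i r * (A i r l : ℝ))
  -- shifting the parameters of block `i` along `c i` rescales that block by `w i / W i`
  set θ : (Σ i, m i) → ℝ := fun x => φ x.1 x.2 + Real.log (w x.1 / W x.1) * c x.1 x.2
  have hexp : ∀ x, Real.exp (∑ r, θ r * ((Matrix.blockDiagonal' A r x : ℕ) : ℝ)) =
      blockMix w v x := by
    rintro ⟨i, j⟩
    have hW : 0 < W i := Finset.sum_pos (fun l _ => Real.exp_pos _) ⟨j, Finset.mem_univ _⟩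
    have hshift : ∑ r, θ ⟨i, r⟩ * (A i r j : ℝ) =
        ∑ r, φ i r * (A i r j : ℝ) + Real.log (w i / W i) := by
      simp only [θ, add_mul, Finset.sum_add_distrib, mul_assoc, ← Finset.mul_sum, hc i j, mul_one]
    rw [sum_mul_blockDiagonal'_apply, hshift, Real.exp_add, Real.exp_log (div_pos (hw i) hW)]
    simp only [blockMix, hφ i j, W]
    ring
  exact ⟨θ, fun x => by simp only [hexp]⟩

theorem blockMix_mem_toric
    (hone : ∀ i, ∃ c : m i → ℝ, ∀ j, ∑ r, c r * (A i r j : ℝ) = 1)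
    {w : o → ℝ} (hw : ∀ i, 0 ≤ w i) {v : ∀ i, n i → ℝ}
    (hv : ∀ i, v i ∈ toric (A i)) (hsum : ∑ x, blockMix w v x = 1) :
    blockMix w v ∈ toric (Matrix.blockDiagonal' A) := by
  set g : (o → ℝ) × (∀ i, n i → ℝ) → (Σ i, n i) → ℝ :=
    fun wv x => blockMix wv.1 wv.2 x / ∑ y, blockMix wv.1 wv.2 y
  have hmix : Continuous fun wv : (o → ℝ) × (∀ i, n i → ℝ) => blockMix wv.1 wv.2 := by
    unfold blockMix
    fun_prop
  have hcont : ContinuousAt g (w, v) :=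
    continuousAt_pi.2 fun x => ((continuous_apply x).comp hmix).continuousAt.div
      (continuous_finsetSum _ fun y _ => (continuous_apply y).comp hmix).continuousAt
      (by simp [hsum])
  have hmem : (w, v) ∈ closure ((Set.univ.pi fun _ => Set.Ioi 0) ×ˢ
      Set.univ.pi fun i => EA (A i)) := by
    rw [closure_prod_eq, closure_pi_set, closure_pi_set]
    exact ⟨fun i _ => by simpa only [closure_Ioi, Set.mem_Ici] using hw i, fun i _ => hv i⟩
  have hmaps : g '' ((Set.univ.pi fun _ => Set.Ioi 0) ×ˢ Set.univ.pi fun i => EA (A i)) ⊆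
      EA (Matrix.blockDiagonal' A) := by
    rintro _ ⟨⟨w', v'⟩, ⟨hw', hv'⟩, rfl⟩
    exact normalize_blockMix_mem_EA A hone (fun i => hw' i trivial) (fun i => hv' i trivial)
  simpa [g, hsum, toric] using closure_mono hmaps (hcont.continuousWithinAt.mem_closure_image hmem)

theorem divFrom_toric_le_extend_zero (i : o) {p : n i → ℝ} (hp : p ∈ simplex (n i)) :
    divFrom (toric (A i)) p ≤
      divFrom (toric (Matrix.blockDiagonal' A)) (Function.extend (Sigma.mk i) p 0) := by
  have : Nonempty (n i) := nonempty_of_mem_simplex hp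
  have : Nonempty (Σ i, n i) := ⟨⟨i, Classical.arbitrary _⟩⟩
  refine le_iInf₂ fun q hq => ?_
  have hqs := toric_subset_simplex _ hq
  have hmass : 0 ≤ blockMass q i := Finset.sum_nonneg fun j _ => hqs.1 _
  rw [KL_extend_zero sigma_mk_injective]
  rcases hmass.eq_or_lt with h0 | hpos
  · have hblock : q ∘ Sigma.mk i = 0 := funext fun j =>
      (Finset.sum_eq_zero_iff_of_nonneg fun j _ => hqs.1 ⟨i, j⟩).1 h0.symm j (Finset.mem_univ j)
    rw [hblock, KL_zero_right (by rw [hp.2]; exact one_ne_zero)]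
    exact le_top
  · calc divFrom (toric (A i)) p ≤ KL p (blockCond q i) :=
          iInf₂_le _ (blockCond_mem_toric A hq hpos.ne')
      _ ≤ KL p (q ∘ Sigma.mk i) :=
          KL_le_KL_of_le_right hp.1 (fun j => hqs.1 _) fun j =>
            le_div_self (hqs.1 _) hpos (blockMass_le_one hqs i)

theorem maxDiv_toric_le_blockDiagonal' (i : o) :
    maxDiv (toric (A i)) ≤ maxDiv (toric (Matrix.blockDiagonal' A)) :=
  iSup₂_le fun _ hp => (divFrom_toric_le_extend_zero A i hp).trans <|
    le_iSup₂ (f := fun p _ => divFrom (toric (Matrix.blockDiagonal' A)) p) _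
      (extend_zero_mem_simplex sigma_mk_injective hp)

theorem divFrom_toric_blockDiagonal'_le
    (hone : ∀ i, ∃ c : m i → ℝ, ∀ j, ∑ r, c r * (A i r j : ℝ) = 1)
    {p : (Σ i, n i) → ℝ} (hp : p ∈ simplex (Σ i, n i)) {r : ℝ}
    (h : ∀ i, blockMass p i ≠ 0 → divFrom (toric (A i)) (blockCond p i) < r) :
    divFrom (toric (Matrix.blockDiagonal' A)) p ≤ r := by
  have hchoice : ∀ i, ∃ v ∈ toric (A i), blockMass p i ≠ 0 → KL (blockCond p i) v ≤ r := by
    intro i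
    by_cases hi : blockMass p i = 0
    · obtain ⟨v, hv⟩ := EA_nonempty (A i)
      exact ⟨v, subset_closure hv, fun h => absurd hi h⟩
    · obtain ⟨v, hlt⟩ := iInf_lt_iff.1 (h i hi)
      obtain ⟨hv, hlt⟩ := iInf_lt_iff.1 hlt
      exact ⟨v, hv, fun _ => hlt.le⟩
  choose v hv hKL using hchoice
  have hmass : ∀ i, 0 ≤ blockMass p i := fun i => Finset.sum_nonneg fun j _ => hp.1 _
  have hmass1 : ∑ i, blockMass p i = 1 := (sum_blockMass p).trans hp.2
  have hsum : ∑ x, blockMix (blockMass p) v x = 1 := by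
    rw [sum_blockMix, ← hmass1]
    refine Finset.sum_congr rfl fun i _ => ?_
    rcases eq_or_ne (blockMass p i) 0 with h0 | h0
    · simp [h0]
    · have := nonempty_of_mem_simplex (blockCond_mem_simplex hp h0)
      rw [(toric_subset_simplex _ (hv i)).2, mul_one]
  have hle := KL_blockMix_le hmass hmass1 hKL
  rw [blockMix_blockMass_blockCond hp.1] at hle
  exact (iInf₂_le _ (blockMix_mem_toric A hone hmass hv hsum)).trans hle

theorem maxDiv_toric_blockDiagonal'_le
    (hone : ∀ i, ∃ c : m i → ℝ, ∀ j, ∑ r, c r * (A i r j : ℝ) = 1) :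
    maxDiv (toric (Matrix.blockDiagonal' A)) ≤ ⨆ i, maxDiv (toric (A i)) := by
  refine iSup₂_le fun p hp => le_of_forall_gt_imp_ge_of_dense fun c hc => ?_
  induction c with
  | bot => exact absurd hc not_lt_bot
  | top => exact le_top
  | coe r =>
    refine divFrom_toric_blockDiagonal'_le A hone hp fun i hi => lt_of_le_of_lt ?_ hc
    exact (le_iSup₂ (f := fun p _ => divFrom (toric (A i)) p) _ (blockCond_mem_simplex hp hi)).trans
      (le_iSup (fun i => maxDiv (toric (A i))) i)

theorem maxDiv_toric_blockDiagonal'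
    (hone : ∀ i, ∃ c : m i → ℝ, ∀ j, ∑ r, c r * (A i r j : ℝ) = 1) :
    maxDiv (toric (Matrix.blockDiagonal' A)) = ⨆ i, maxDiv (toric (A i)) :=
  le_antisymm (maxDiv_toric_blockDiagonal'_le A hone)
    (iSup_le (maxDiv_toric_le_blockDiagonal' A))

end BlockDiagonal

theorem stmt9_general {k : ℕ} (d n : Fin k → ℕ) (hd : ∀ i, 0 < d i)
    (A : ∀ i : Fin k, Matrix (Fin (d i)) (Fin (n i)) ℕ)
    (hfirst : ∀ (i : Fin k) (j : Fin (n i)), A i ⟨0, hd i⟩ j = 1) :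
    maxDiv (toric (Matrix.blockDiagonal' A)) = ⨆ i : Fin k, maxDiv (toric (A i)) :=
  maxDiv_toric_blockDiagonal' A fun i => ⟨Pi.single ⟨0, hd i⟩ 1, fun j => by
    simp only [Pi.single_apply, ite_mul, one_mul, zero_mul, Finset.sum_ite_eq', Finset.mem_univ,
      if_true, hfirst, Nat.cast_one]⟩

/-- For a block-diagonal matrix `A` with blocks `A_1,…,A_k`, each having the
all-ones vector as its first row, the maximum divergence from `M_A` is the maximum of the
maximum divergences from the `M_{A_i}`. -/
theorem stmt9 {k : ℕ} (hk : 1 ≤ k) (d n : Fin k → ℕ) (hd : ∀ i, 0 < d i)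
    (A : ∀ i : Fin k, Matrix (Fin (d i)) (Fin (n i)) ℕ)
    (hfirst : ∀ (i : Fin k) (j : Fin (n i)), A i ⟨0, hd i⟩ j = 1) :
    maxDiv (toric (Matrix.blockDiagonal' A)) = ⨆ i : Fin k, maxDiv (toric (A i)) :=
  stmt9_general d n hd A hfirst
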